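/- Assume Σ is reachable from x* and controllable to x*, and cyclo-dissipative with respect to x*. Assume additionally that for every state x there exist a time T_l ≥ 0, τ ∈ [0,T_l], and a trajectory (x_l,u_l) on [0,T_l] with x_l(0) = x_l(T_l) = x*, x_l(τ) = x, whose total supply is zero. Then F_ac(x) = F_rc(x) for all x, the storage function is unique up to an additive constant, and every storage function F satisfies F(x) − F(x*) = ∫_0^τ s(x_l(t),u_l(t)) dt = −∫_τ^{T_l} s(x_l(t),u_l(t)) dt along any such trajectory. -/

import Mathlib

open MeasureTheory

/-- A trajectory of the control system `ẋ = f(x,u)` with supply rate `s`,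
on an interval `[t₁, t₂]`. -/
structure Traj {n m : ℕ} (f : (Fin n → ℝ) → (Fin m → ℝ) → (Fin n → ℝ))
    (s : (Fin n → ℝ) → (Fin m → ℝ) → ℝ) where
  t₁ : ℝ
  t₂ : ℝ
  hle : t₁ ≤ t₂
  x : ℝ → Fin n → ℝ
  u : ℝ → Fin m → ℝ
  hu : Measurable u
  hx : Continuous x
  hf : IntervalIntegrable (fun t => f (x t) (u t)) volume t₁ t₂
  hs : IntervalIntegrable (fun t => s (x t) (u t)) volume t₁ t₂
  hdyn : ∀ t ∈ Set.Icc t₁ t₂, x t = x t₁ + ∫ τ in t₁..t, f (x τ) (u τ)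

/-- The supply of a trajectory. -/
noncomputable def Traj.supply {n m : ℕ} {f : (Fin n → ℝ) → (Fin m → ℝ) → (Fin n → ℝ)}
    {s : (Fin n → ℝ) → (Fin m → ℝ) → ℝ} (T : Traj f s) : ℝ :=
  ∫ t in T.t₁..T.t₂, s (T.x t) (T.u t)

/-- `F` is a storage function: the dissipation inequality holds along all trajectories. -/
def IsStorage {n m : ℕ} (f : (Fin n → ℝ) → (Fin m → ℝ) → (Fin n → ℝ))
    (s : (Fin n → ℝ) → (Fin m → ℝ) → ℝ) (F : (Fin n → ℝ) → ℝ) : Prop :=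
  ∀ T : Traj f s, F (T.x T.t₂) - F (T.x T.t₁) ≤ T.supply

/-- Cyclo-dissipativity with respect to the ground state `xs`: nonnegative supply along
every trajectory beginning and ending at `xs`. -/
def CycloDissipativeWrt {n m : ℕ} (f : (Fin n → ℝ) → (Fin m → ℝ) → (Fin n → ℝ))
    (s : (Fin n → ℝ) → (Fin m → ℝ) → ℝ) (xs : Fin n → ℝ) : Prop :=
  ∀ T : Traj f s, T.x T.t₁ = xs → T.x T.t₂ = xs → 0 ≤ T.supply

/-- The set of values `-supply` over trajectories from `x` to `xs`. -/
def Sac {n m : ℕ} (f : (Fin n → ℝ) → (Fin m → ℝ) → (Fin n → ℝ))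
    (s : (Fin n → ℝ) → (Fin m → ℝ) → ℝ) (xs x : Fin n → ℝ) : Set ℝ :=
  {r : ℝ | ∃ T : Traj f s, T.x T.t₁ = x ∧ T.x T.t₂ = xs ∧ r = -T.supply}

/-- The set of values `supply` over trajectories from `xs` to `x`. -/
def Src {n m : ℕ} (f : (Fin n → ℝ) → (Fin m → ℝ) → (Fin n → ℝ))
    (s : (Fin n → ℝ) → (Fin m → ℝ) → ℝ) (xs x : Fin n → ℝ) : Set ℝ :=
  {r : ℝ | ∃ T : Traj f s, T.x T.t₁ = xs ∧ T.x T.t₂ = x ∧ r = T.supply}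

/-!
Gluing a trajectory from `xs` to `x` to one from `x` back to `xs` yields a cycle at `xs`, so
by cyclo-dissipativity every value in `Sac f s xs x` is at most every value in `Src f s xs x`.
The two halves of a zero-supply loop through `x` put the same number, the supply accumulated up
to `x`, into both sets, so it is their supremum and infimum. For a storage function `F`, the
dissipation inequalities along the two halves of that loop add up to `0 ≤ 0`, so both are
equalities; this determines `F x - F xs` independently of `F`.
-/

open Set intervalIntegral
open scoped Interval

section GlueAt

variable {α : Type*}

noncomputable def glueAt (c : ℝ) (g g' : ℝ → α) : ℝ → α := fun t => if t ≤ c then g t else g' t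

variable {a b c : ℝ} {g g' : ℝ → α}

lemma glueAt_eqOn_Iic : EqOn (glueAt c g g') g (Iic c) := fun _ ht => if_pos ht

lemma glueAt_eqOn_Ioi : EqOn (glueAt c g g') g' (Ioi c) := fun _ ht => if_neg (not_le.mpr ht)

lemma comp_glueAt {β γ : Type*} (φ : α → β → γ) (v v' : ℝ → β) :
    (fun t => φ (glueAt c g g' t) (glueAt c v v' t))
      = glueAt c (fun t => φ (g t) (v t)) (fun t => φ (g' t) (v' t)) :=
  funext fun t => by by_cases h : t ≤ c <;> simp [glueAt, h]

lemma eqOn_glueAt_of_le (ha : a ≤ c) (hb : b ≤ c) : EqOn g (glueAt c g g') (Ι a b) :=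
  fun _ ht => (glueAt_eqOn_Iic (ht.2.trans (max_le ha hb))).symm

lemma eqOn_glueAt_of_ge (ha : c ≤ a) (hb : c ≤ b) : EqOn g' (glueAt c g g') (Ι a b) :=
  fun _ ht => (glueAt_eqOn_Ioi ((le_min ha hb).trans_lt ht.1)).symm

variable {E : Type*} [NormedAddCommGroup E] {G G' : ℝ → E}

lemma IntervalIntegrable.glueAt (hac : a ≤ c) (hcb : c ≤ b)
    (hG : IntervalIntegrable G volume a c) (hG' : IntervalIntegrable G' volume c b) :
    IntervalIntegrable (glueAt c G G') volume a b :=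
  (hG.congr (eqOn_glueAt_of_le hac le_rfl)).trans (hG'.congr (eqOn_glueAt_of_ge le_rfl hcb))

lemma integral_glueAt [NormedSpace ℝ E] (hac : a ≤ c) (hcb : c ≤ b)
    (hG : IntervalIntegrable G volume a c) (hG' : IntervalIntegrable G' volume c b) :
    ∫ t in a..b, glueAt c G G' t = (∫ t in a..c, G t) + ∫ t in c..b, G' t := by
  have hl := eqOn_glueAt_of_le (g := G) (g' := G') hac le_rfl
  have hr := eqOn_glueAt_of_ge (g := G) (g' := G') le_rfl hcb
  rw [← integral_add_adjacent_intervals (hG.congr hl) (hG'.congr hr),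
    integral_congr_ae (Filter.Eventually.of_forall fun t ht => (hl ht).symm),
    integral_congr_ae (Filter.Eventually.of_forall fun t ht => (hr ht).symm)]

end GlueAt

namespace Traj

variable {n m : ℕ} {f : (Fin n → ℝ) → (Fin m → ℝ) → (Fin n → ℝ)}
  {s : (Fin n → ℝ) → (Fin m → ℝ) → ℝ} (T : Traj f s) {a b : ℝ}

lemma intervalIntegrable_f (ha : a ∈ Icc T.t₁ T.t₂) (hb : b ∈ Icc T.t₁ T.t₂) :
    IntervalIntegrable (fun t => f (T.x t) (T.u t)) volume a b :=
  T.hf.mono_set (uIcc_subset_uIcc (Icc_subset_uIcc ha) (Icc_subset_uIcc hb))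

lemma intervalIntegrable_s (ha : a ∈ Icc T.t₁ T.t₂) (hb : b ∈ Icc T.t₁ T.t₂) :
    IntervalIntegrable (fun t => s (T.x t) (T.u t)) volume a b :=
  T.hs.mono_set (uIcc_subset_uIcc (Icc_subset_uIcc ha) (Icc_subset_uIcc hb))

lemma x_sub_x_eq_integral (ha : a ∈ Icc T.t₁ T.t₂) (hb : b ∈ Icc T.t₁ T.t₂) :
    T.x b - T.x a = ∫ t in a..b, f (T.x t) (T.u t) := by
  have hl : T.t₁ ∈ Icc T.t₁ T.t₂ := left_mem_Icc.mpr T.hle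
  rw [T.hdyn b hb, T.hdyn a ha, add_sub_add_left_eq_sub,
    integral_interval_sub_left (T.intervalIntegrable_f hl hb) (T.intervalIntegrable_f hl ha)]

lemma integral_add_integral_eq_supply {τ : ℝ} (hτ : τ ∈ Icc T.t₁ T.t₂) :
    (∫ t in T.t₁..τ, s (T.x t) (T.u t)) + ∫ t in τ..T.t₂, s (T.x t) (T.u t) = T.supply :=
  integral_add_adjacent_intervals (T.intervalIntegrable_s (left_mem_Icc.mpr T.hle) hτ)
    (T.intervalIntegrable_s hτ (right_mem_Icc.mpr T.hle))

lemma neg_integral_eq_integral_of_supply_eq_zero (hzero : T.supply = 0) {τ : ℝ}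
    (hτ : τ ∈ Icc T.t₁ T.t₂) :
    -∫ t in τ..T.t₂, s (T.x t) (T.u t) = ∫ t in T.t₁..τ, s (T.x t) (T.u t) := by
  linarith [T.integral_add_integral_eq_supply hτ]

def restrict (ha : a ∈ Icc T.t₁ T.t₂) (hb : b ∈ Icc T.t₁ T.t₂) (hab : a ≤ b) : Traj f s where
  t₁ := a
  t₂ := b
  hle := hab
  x := T.x
  u := T.u
  hu := T.hu
  hx := T.hx
  hf := T.intervalIntegrable_f ha hb
  hs := T.intervalIntegrable_s ha hb
  hdyn t ht := by
    rw [← T.x_sub_x_eq_integral ha ⟨ha.1.trans ht.1, ht.2.trans hb.2⟩, add_sub_cancel]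

noncomputable def shift (d : ℝ) : Traj f s where
  t₁ := T.t₁ - d
  t₂ := T.t₂ - d
  hle := sub_le_sub_right T.hle d
  x t := T.x (t + d)
  u t := T.u (t + d)
  hu := T.hu.comp (measurable_add_const d)
  hx := T.hx.comp (continuous_add_const d)
  hf := T.hf.comp_add_right d
  hs := T.hs.comp_add_right d
  hdyn t ht := by
    rw [integral_comp_add_right (fun τ => f (T.x τ) (T.u τ)), sub_add_cancel]
    exact T.hdyn (t + d) ⟨by linarith [ht.1], by linarith [ht.2]⟩

@[simp] lemma shift_t₁ (d : ℝ) : (T.shift d).t₁ = T.t₁ - d := rfl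

@[simp] lemma shift_t₂ (d : ℝ) : (T.shift d).t₂ = T.t₂ - d := rfl

@[simp] lemma shift_x (d : ℝ) (t : ℝ) : (T.shift d).x t = T.x (t + d) := rfl

lemma supply_shift (d : ℝ) : (T.shift d).supply = T.supply := by
  change ∫ t in T.t₁ - d..T.t₂ - d, s (T.x (t + d)) (T.u (t + d)) = _
  rw [integral_comp_add_right (fun t => s (T.x t) (T.u t)), sub_add_cancel, sub_add_cancel]
  rfl

variable (T' : Traj f s)

noncomputable def glue (hmeet : T.t₂ = T'.t₁) (hjoin : T.x T.t₂ = T'.x T'.t₁) : Traj f s where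
  t₁ := T.t₁
  t₂ := T'.t₂
  hle := T.hle.trans (hmeet ▸ T'.hle)
  x := glueAt T.t₂ T.x T'.x
  u := glueAt T.t₂ T.u T'.u
  hu := T.hu.ite measurableSet_Iic T'.hu
  hx := Continuous.if_le T.hx T'.hx continuous_id continuous_const fun t h => by
    rw [h, hjoin, hmeet]
  hf := by
    rw [comp_glueAt]
    exact T.hf.glueAt T.hle (hmeet ▸ T'.hle) (hmeet ▸ T'.hf)
  hs := by
    rw [comp_glueAt]
    exact T.hs.glueAt T.hle (hmeet ▸ T'.hle) (hmeet ▸ T'.hs)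
  hdyn t ht := by
    have h₁ : T.t₁ ∈ Icc T.t₁ T.t₂ := left_mem_Icc.mpr T.hle
    have h₂ : T.t₂ ∈ Icc T.t₁ T.t₂ := right_mem_Icc.mpr T.hle
    rw [comp_glueAt, glueAt_eqOn_Iic T.hle]
    rcases le_or_gt t T.t₂ with htc | htc
    · rw [glueAt_eqOn_Iic htc, integral_congr_ae (Filter.Eventually.of_forall fun τ hτ =>
        (eqOn_glueAt_of_le T.hle htc hτ).symm), ← T.x_sub_x_eq_integral h₁ ⟨ht.1, htc⟩,
        add_sub_cancel]
    · have ht' : t ∈ Icc T'.t₁ T'.t₂ := ⟨hmeet ▸ htc.le, ht.2⟩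
      have h' := T'.x_sub_x_eq_integral (left_mem_Icc.mpr T'.hle) ht'
      rw [← hjoin, ← hmeet] at h'
      rw [glueAt_eqOn_Ioi htc, integral_glueAt T.hle htc.le (T.intervalIntegrable_f h₁ h₂)
        (hmeet ▸ T'.intervalIntegrable_f (left_mem_Icc.mpr T'.hle) ht'),
        ← T.x_sub_x_eq_integral h₁ h₂, ← h']
      abel

noncomputable def append (hjoin : T.x T.t₂ = T'.x T'.t₁) : Traj f s :=
  T.glue (T'.shift (T'.t₁ - T.t₂)) (by simp) (by simpa using hjoin)

variable {T T'}

section Glue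

variable (hmeet : T.t₂ = T'.t₁) (hjoin : T.x T.t₂ = T'.x T'.t₁)

lemma glue_x_t₁ : (T.glue T' hmeet hjoin).x (T.glue T' hmeet hjoin).t₁ = T.x T.t₁ :=
  glueAt_eqOn_Iic T.hle

lemma glue_x_t₂ : (T.glue T' hmeet hjoin).x (T.glue T' hmeet hjoin).t₂ = T'.x T'.t₂ := by
  change glueAt T.t₂ T.x T'.x T'.t₂ = _
  rcases le_or_gt T'.t₂ T.t₂ with h | h
  · have hT' : T'.t₂ = T'.t₁ := (le_antisymm h (hmeet ▸ T'.hle)).trans hmeet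
    rw [glueAt_eqOn_Iic h, hT', ← hjoin, hmeet]
  · exact glueAt_eqOn_Ioi h

lemma supply_glue : (T.glue T' hmeet hjoin).supply = T.supply + T'.supply := by
  change ∫ t in T.t₁..T'.t₂, s (glueAt T.t₂ T.x T'.x t) (glueAt T.t₂ T.u T'.u t) = _
  rw [comp_glueAt, integral_glueAt T.hle (hmeet ▸ T'.hle) T.hs (hmeet ▸ T'.hs)]
  simp only [supply, hmeet]

end Glue

variable (hjoin : T.x T.t₂ = T'.x T'.t₁)

lemma append_x_t₁ : (T.append T' hjoin).x (T.append T' hjoin).t₁ = T.x T.t₁ := glue_x_t₁ ..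

lemma append_x_t₂ : (T.append T' hjoin).x (T.append T' hjoin).t₂ = T'.x T'.t₂ :=
  (glue_x_t₂ ..).trans (by simp)

lemma supply_append : (T.append T' hjoin).supply = T.supply + T'.supply :=
  (supply_glue ..).trans (by rw [supply_shift])

end Traj

section Storage

variable {n m : ℕ} {f : (Fin n → ℝ) → (Fin m → ℝ) → (Fin n → ℝ)}
  {s : (Fin n → ℝ) → (Fin m → ℝ) → ℝ} {xs x : Fin n → ℝ}

lemma Traj.integral_mem_Src (T : Traj f s) (h : T.x T.t₁ = xs) {τ : ℝ}
    (hτ : τ ∈ Icc T.t₁ T.t₂) : ∫ t in T.t₁..τ, s (T.x t) (T.u t) ∈ Src f s xs (T.x τ) :=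
  ⟨T.restrict (left_mem_Icc.mpr T.hle) hτ hτ.1, h, rfl, rfl⟩

lemma Traj.neg_integral_mem_Sac (T : Traj f s) (h : T.x T.t₂ = xs) {τ : ℝ}
    (hτ : τ ∈ Icc T.t₁ T.t₂) : -∫ t in τ..T.t₂, s (T.x t) (T.u t) ∈ Sac f s xs (T.x τ) :=
  ⟨T.restrict hτ (right_mem_Icc.mpr T.hle) hτ.2, rfl, h, rfl⟩

lemma CycloDissipativeWrt.le_of_mem_Sac_of_mem_Src (hdis : CycloDissipativeWrt f s xs)
    {r r' : ℝ} (hr : r ∈ Sac f s xs x) (hr' : r' ∈ Src f s xs x) : r ≤ r' := by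
  obtain ⟨Ta, hTa₁, hTa₂, rfl⟩ := hr
  obtain ⟨Tr, hTr₁, hTr₂, rfl⟩ := hr'
  have hjoin : Tr.x Tr.t₂ = Ta.x Ta.t₁ := hTr₂.trans hTa₁.symm
  have hcycle := hdis (Tr.append Ta hjoin) ((Tr.append_x_t₁ hjoin).trans hTr₁)
    ((Tr.append_x_t₂ hjoin).trans hTa₂)
  rw [Tr.supply_append] at hcycle
  linarith

lemma CycloDissipativeWrt.sSup_Sac_eq_sInf_Src (hdis : CycloDissipativeWrt f s xs) {a : ℝ}
    (hac : a ∈ Sac f s xs x) (hrc : a ∈ Src f s xs x) :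
    sSup (Sac f s xs x) = sInf (Src f s xs x) := by
  rw [IsGreatest.csSup_eq ⟨hac, fun _ hr => hdis.le_of_mem_Sac_of_mem_Src hr hrc⟩,
    IsLeast.csInf_eq ⟨hrc, fun _ hr => hdis.le_of_mem_Sac_of_mem_Src hac hr⟩]

lemma IsStorage.sub_le_integral {F : (Fin n → ℝ) → ℝ} (hF : IsStorage f s F) (T : Traj f s)
    {a b : ℝ} (ha : a ∈ Icc T.t₁ T.t₂) (hb : b ∈ Icc T.t₁ T.t₂) (hab : a ≤ b) :
    F (T.x b) - F (T.x a) ≤ ∫ t in a..b, s (T.x t) (T.u t) :=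
  hF (T.restrict ha hb hab)

lemma IsStorage.sub_eq_integral_of_supply_eq_zero {F : (Fin n → ℝ) → ℝ} (hF : IsStorage f s F)
    (T : Traj f s) (hcycle : T.x T.t₂ = T.x T.t₁) (hzero : T.supply = 0) {τ : ℝ}
    (hτ : τ ∈ Icc T.t₁ T.t₂) :
    F (T.x τ) - F (T.x T.t₁) = ∫ t in T.t₁..τ, s (T.x t) (T.u t) ∧
      F (T.x τ) - F (T.x T.t₁) = -∫ t in τ..T.t₂, s (T.x t) (T.u t) := by
  have hin := hF.sub_le_integral T (left_mem_Icc.mpr T.hle) hτ hτ.1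
  have hout := hF.sub_le_integral T hτ (right_mem_Icc.mpr T.hle) hτ.2
  rw [hcycle] at hout
  have hsplit := T.neg_integral_eq_integral_of_supply_eq_zero hzero hτ
  constructor <;> linarith

end Storage

theorem weakly_cycloLossless_storage_unique_general {n m : ℕ}
    (f : (Fin n → ℝ) → (Fin m → ℝ) → (Fin n → ℝ))
    (s : (Fin n → ℝ) → (Fin m → ℝ) → ℝ)
    (xs : Fin n → ℝ)
    (hdis : CycloDissipativeWrt f s xs)
    (hweak : ∀ x : Fin n → ℝ, ∃ T : Traj f s, T.t₁ = 0 ∧ T.x 0 = xs ∧ T.x T.t₂ = xs ∧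
      (∃ τ ∈ Set.Icc (0 : ℝ) T.t₂, T.x τ = x) ∧ T.supply = 0) :
    (∀ x, sSup (Sac f s xs x) = sInf (Src f s xs x)) ∧
    (∀ F₁ F₂ : (Fin n → ℝ) → ℝ, IsStorage f s F₁ → IsStorage f s F₂ →
      ∃ c : ℝ, ∀ x, F₁ x - F₂ x = c) ∧
    (∀ F : (Fin n → ℝ) → ℝ, IsStorage f s F →
      ∀ (x : Fin n → ℝ) (T : Traj f s) (τ : ℝ),
        T.t₁ = 0 → T.x 0 = xs → T.x T.t₂ = xs → τ ∈ Set.Icc (0 : ℝ) T.t₂ →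
        T.x τ = x → T.supply = 0 →
        F x - F xs = ∫ t in (0:ℝ)..τ, s (T.x t) (T.u t) ∧
        F x - F xs = -∫ t in τ..T.t₂, s (T.x t) (T.u t)) := by
  refine ⟨fun x => ?_, fun F₁ F₂ hF₁ hF₂ => ⟨F₁ xs - F₂ xs, fun x => ?_⟩, ?_⟩
  · obtain ⟨T, ht₁, hx₀, hx₂, ⟨τ, hτ, rfl⟩, hzero⟩ := hweak x
    rw [← ht₁] at hx₀ hτ
    have hac := T.neg_integral_mem_Sac hx₂ hτ
    rw [T.neg_integral_eq_integral_of_supply_eq_zero hzero hτ] at hac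
    exact hdis.sSup_Sac_eq_sInf_Src hac (T.integral_mem_Src hx₀ hτ)
  · obtain ⟨T, ht₁, hx₀, hx₂, ⟨τ, hτ, rfl⟩, hzero⟩ := hweak x
    rw [← ht₁] at hx₀ hτ
    subst hx₀
    linarith [(hF₁.sub_eq_integral_of_supply_eq_zero T hx₂ hzero hτ).1,
      (hF₂.sub_eq_integral_of_supply_eq_zero T hx₂ hzero hτ).1]
  · rintro F hF x T τ ht₁ hx₀ hx₂ hτ rfl hzero
    rw [← ht₁] at hx₀ hτ ⊢
    subst hx₀
    exact hF.sub_eq_integral_of_supply_eq_zero T hx₂ hzero hτ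

/-- Suppose the system is reachable from and controllable to `xs`, cyclo-dissipative with
respect to `xs`, and weakly cyclo-lossless: every state `x` lies on some zero-supply
cyclic trajectory through `xs` on an interval `[0, T_l]`. Then `F_ac = F_rc`, the storage
function is unique up to an additive constant, and every storage function `F` satisfies
`F x - F xs = ∫_0^τ s dt = -∫_τ^{T_l} s dt` along any such trajectory. -/
theorem weakly_cycloLossless_storage_unique {n m : ℕ}
    (f : (Fin n → ℝ) → (Fin m → ℝ) → (Fin n → ℝ))
    (s : (Fin n → ℝ) → (Fin m → ℝ) → ℝ)
    (hfc : Continuous fun q : (Fin n → ℝ) × (Fin m → ℝ) => f q.1 q.2)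
    (hsc : Continuous fun q : (Fin n → ℝ) × (Fin m → ℝ) => s q.1 q.2)
    (xs : Fin n → ℝ)
    (hreach : ∀ x : Fin n → ℝ, ∃ T : Traj f s, T.x T.t₁ = xs ∧ T.x T.t₂ = x)
    (hctrl : ∀ x : Fin n → ℝ, ∃ T : Traj f s, T.x T.t₁ = x ∧ T.x T.t₂ = xs)
    (hdis : CycloDissipativeWrt f s xs)
    (hweak : ∀ x : Fin n → ℝ, ∃ T : Traj f s, T.t₁ = 0 ∧ T.x 0 = xs ∧ T.x T.t₂ = xs ∧
      (∃ τ ∈ Set.Icc (0 : ℝ) T.t₂, T.x τ = x) ∧ T.supply = 0) :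
    (∀ x, sSup (Sac f s xs x) = sInf (Src f s xs x)) ∧
    (∀ F₁ F₂ : (Fin n → ℝ) → ℝ, IsStorage f s F₁ → IsStorage f s F₂ →
      ∃ c : ℝ, ∀ x, F₁ x - F₂ x = c) ∧
    (∀ F : (Fin n → ℝ) → ℝ, IsStorage f s F →
      ∀ (x : Fin n → ℝ) (T : Traj f s) (τ : ℝ),
        T.t₁ = 0 → T.x 0 = xs → T.x T.t₂ = xs → τ ∈ Set.Icc (0 : ℝ) T.t₂ →
        T.x τ = x → T.supply = 0 →
        F x - F xs = ∫ t in (0:ℝ)..τ, s (T.x t) (T.u t) ∧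
        F x - F xs = -∫ t in τ..T.t₂, s (T.x t) (T.u t)) :=
  weakly_cycloLossless_storage_unique_general f s xs hdis hweak
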